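/- Let f, g : H → ℝ be convex continuous functions on a real Hilbert space H with C_f := argmin f and C_g := argmin g both nonempty and bounded. If s_f(x) = s_g(x) for every x ∈ H and f(x) = g(x) for every x ∈ C_f ∪ C_g, then f = g on all of H. -/

import Mathlib

open Set Metric MeasureTheory Filter Bornology RealInnerProductSpace

variable {H : Type*} [NormedAddCommGroup H] [InnerProductSpace ℝ H] [CompleteSpace H]

/-- The subdifferential of `f` at `x`. -/
def subdiff (f : H → ℝ) (x : H) : Set H :=
  {v | ∀ y, f x + ⟪v, y - x⟫ ≤ f y}

/-- The slope of `f` at `x`: the distance from `0` to the subdifferential. -/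
noncomputable def slopeFn (f : H → ℝ) (x : H) : ℝ :=
  Metric.infDist 0 (subdiff f x)

/-- The set of (global) minimizers of `f`. -/
def argminSet (f : H → ℝ) : Set H := {x | ∀ y, f x ≤ f y}

/-- One-sided sup of `ω` over `U`:  `‖ω|_U = sup_{x ∈ U} max (ω x) 0`. -/
noncomputable def osup (ω : H → ℝ) (U : Set H) : ℝ :=
  sSup ((fun x => max (ω x) 0) '' U)

/-!
A minimizer `z` of `f` has slope `0` for `f`, hence for `g`, so it also minimizes `g`, and
`f z = g z`; by symmetry it suffices to show `f ≤ g`. Fix `x` and `λ > 0` and run the proximal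
point algorithm for `g` from `x`, `x_{k+1} = prox_{λg}(x_k)`. In one step `f` drops by at most
`s(x_k) ‖x_k - x_{k+1}‖` while `g` drops by at least `‖x_k - x_{k+1}‖² / λ ≥ λ s(x_{k+1})²`,
so by AM-GM `(f - g)(x_k) - λ/2 s(x_k)²` is nondecreasing. The iterates stay within `‖x - z‖`
of `z` (Fejér monotonicity) and `s(x_k) → 0` because the decreases of `g` are summable, so
`(f - g)(x_k) ≤ s(x_k) ‖x - z‖ → 0`. Hence `(f - g)(x) ≤ λ/2 s(x)²`, and `λ → 0` gives the claim.
-/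

open Topology

section NormedSpace

variable {E : Type*} [NormedAddCommGroup E] [NormedSpace ℝ E] {s : Set E} {f : E → ℝ} {m : ℝ}

theorem StrongConvexOn.add_sq_norm_sub_le_of_isMinOn (hf : StrongConvexOn s m f) {p y : E}
    (hp : IsMinOn f s p) (hps : p ∈ s) (hy : y ∈ s) :
    f p + m / 2 * ‖y - p‖ ^ 2 ≤ f y := by
  have hgap : ∀ n : ℕ, f p + (1 - 1 / ((n : ℝ) + 1)) * (m / 2 * ‖y - p‖ ^ 2) ≤ f y := by
    intro n
    set t : ℝ := 1 / ((n : ℝ) + 1)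
    have ht : 0 < t := by positivity
    have ht1 : t ≤ 1 := div_le_one_of_le₀ (by linarith [n.cast_nonneg (α := ℝ)]) (by positivity)
    have hconv := hf.2 hy hps ht.le (sub_nonneg.2 ht1) (add_sub_cancel t 1)
    have hmin := isMinOn_iff.1 hp _ (hf.1 hy hps ht.le (sub_nonneg.2 ht1) (add_sub_cancel t 1))
    simp only [smul_eq_mul] at hconv
    nlinarith
  have hlim : Tendsto (fun n : ℕ => f p + (1 - 1 / ((n : ℝ) + 1)) * (m / 2 * ‖y - p‖ ^ 2))
      atTop (𝓝 (f p + m / 2 * ‖y - p‖ ^ 2)) := by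
    simpa using ((tendsto_one_div_add_atTop_nhds_zero_nat.const_sub 1).mul_const
      (m / 2 * ‖y - p‖ ^ 2)).const_add (f p)
  exact le_of_tendsto' hlim hgap

theorem StrongConvexOn.exists_isMinOn [CompleteSpace E] (hf : StrongConvexOn s m f) (hm : 0 < m)
    (hs : IsClosed s) (hne : s.Nonempty) (hfc : ContinuousOn f s) (hbdd : BddBelow (f '' s)) :
    ∃ p ∈ s, IsMinOn f s p := by
  set c := sInf (f '' s)
  have hc : ∀ y ∈ s, c ≤ f y := fun y hy => csInf_le hbdd ⟨y, hy, rfl⟩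
  have hmid : ∀ y ∈ s, ∀ z ∈ s, m / 8 * ‖y - z‖ ^ 2 ≤ (f y + f z) / 2 - c := by
    intro y hy z hz
    have hhalf : (0 : ℝ) ≤ 1 / 2 := by norm_num
    have h := hf.2 hy hz hhalf hhalf (by norm_num)
    have := hc _ (hf.1 hy hz hhalf hhalf (by norm_num))
    simp only [smul_eq_mul] at h
    linarith
  have happrox : ∀ n : ℕ, ∃ u ∈ s, f u < c + 1 / ((n : ℝ) + 1) := fun n => by
    obtain ⟨_, ⟨u, hu, rfl⟩, hlt⟩ :=
      exists_lt_of_csInf_lt (hne.image f)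
        (lt_add_of_pos_right c (by positivity : (0 : ℝ) < 1 / ((n : ℝ) + 1)))
    exact ⟨u, hu, hlt⟩
  choose u hus hu using happrox
  have hcauchy : CauchySeq u := by
    refine cauchySeq_of_le_tendsto_0 (fun N : ℕ => √(8 / m * (1 / ((N : ℝ) + 1)))) ?_ ?_
    · intro n k N hn hk
      have hεn : 1 / ((n : ℝ) + 1) ≤ 1 / ((N : ℝ) + 1) := by gcongr
      have hεk : 1 / ((k : ℝ) + 1) ≤ 1 / ((N : ℝ) + 1) := by gcongr
      have h := hmid _ (hus n) _ (hus k)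
      rw [dist_eq_norm, ← Real.sqrt_sq (norm_nonneg _)]
      refine Real.sqrt_le_sqrt ?_
      rw [div_mul_eq_mul_div, le_div_iff₀ hm]
      linarith [hu n, hu k]
    · simpa using (tendsto_one_div_add_atTop_nhds_zero_nat.const_mul (8 / m)).sqrt
  obtain ⟨p, hp⟩ := cauchySeq_tendsto_of_complete hcauchy
  have hps : p ∈ s := hs.mem_of_tendsto hp (Eventually.of_forall hus)
  have hfp : Tendsto (fun n => f (u n)) atTop (𝓝 (f p)) :=
    (hfc p hps).tendsto.comp (tendsto_nhdsWithin_iff.2 ⟨hp, Eventually.of_forall hus⟩)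
  have hpc : f p ≤ c := by
    refine le_of_tendsto_of_tendsto' hfp ?_ fun n => (hu n).le
    simpa using tendsto_one_div_add_atTop_nhds_zero_nat.const_add c
  exact ⟨p, hps, isMinOn_iff.2 fun y hy => hpc.trans (hc y hy)⟩

theorem ConvexOn.exists_continuousLinearMap_add_le (hf : ConvexOn ℝ univ f) (hfc : Continuous f)
    (x : E) : ∃ φ : E →L[ℝ] ℝ, ∀ y, f x + φ (y - x) ≤ f y := by
  obtain ⟨ℓ, hℓ⟩ := geometric_hahn_banach_point_open hf.convex_strict_epigraph
    (by simpa using isOpen_lt (hfc.comp continuous_fst) continuous_snd)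
    (by simp : (x, f x) ∉ {p : E × ℝ | p.1 ∈ univ ∧ f p.1 < p.2})
  set a := ℓ (0, 1)
  have hsplit : ∀ y t, ℓ (y, t) = ℓ (y, 0) + t * a := fun y t => by
    rw [show (y, t) = (y, 0) + t • ((0 : E), (1 : ℝ)) by simp, map_add, map_smul, smul_eq_mul]
  have ha : 0 < a := by
    have := hℓ (x, f x + 1) (by simp)
    rw [hsplit x (f x + 1), hsplit x (f x)] at this
    linarith
  have hsupp : ∀ y, ℓ (x, 0) + f x * a ≤ ℓ (y, 0) + f y * a := fun y => by
    refine le_of_forall_pos_lt_add fun ε hε => ?_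
    have := hℓ (y, f y + ε / a) (by simp; positivity)
    rw [hsplit, hsplit y, add_mul, div_mul_cancel₀ _ ha.ne'] at this
    linarith
  refine ⟨-a⁻¹ • ℓ.comp (ContinuousLinearMap.inl ℝ E ℝ), fun y => ?_⟩
  have hφ : ℓ.comp (ContinuousLinearMap.inl ℝ E ℝ) (y - x) = ℓ (y, 0) - ℓ (x, 0) := by
    rw [ContinuousLinearMap.comp_apply, ContinuousLinearMap.inl_apply, ← map_sub]
    simp
  rw [smul_apply, hφ, smul_eq_mul]
  have := hsupp y
  field_simp
  nlinarith

end NormedSpace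

section InnerProductSpace

variable {E : Type*} [NormedAddCommGroup E] [InnerProductSpace ℝ E]

theorem ConvexOn.strongConvexOn_add_sq_norm_sub {s : Set E} {g : E → ℝ} (hg : ConvexOn ℝ s g)
    (m : ℝ) (q : E) : StrongConvexOn s m fun y => g y + m / 2 * ‖y - q‖ ^ 2 := by
  have hsplit : (fun y => g y + m / 2 * ‖y - q‖ ^ 2 - m / 2 * ‖y‖ ^ 2) =
      fun y => g y + (-m • innerSL ℝ q) y + m / 2 * ‖q‖ ^ 2 := by
    ext y
    simp [norm_sub_sq_real, real_inner_comm]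
    ring
  rw [strongConvexOn_iff_convex, hsplit]
  exact (hg.add ((-m • innerSL ℝ q).toLinearMap.convexOn hg.1)).add_const _

variable {f g : E → ℝ} {x y : E}

theorem isClosed_subdiff (f : E → ℝ) (x : E) : IsClosed (subdiff f x) := by
  simp only [subdiff, ofPred_forall]
  exact isClosed_iInter fun y =>
    isClosed_le (continuous_const.add (continuous_id.inner continuous_const)) continuous_const

theorem slopeFn_nonneg (f : E → ℝ) (x : E) : 0 ≤ slopeFn f x := Metric.infDist_nonneg

theorem slopeFn_le_norm {v : E} (hv : v ∈ subdiff f x) : slopeFn f x ≤ ‖v‖ := by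
  simpa [slopeFn] using Metric.infDist_le_dist_of_mem (x := (0 : E)) hv

theorem sub_le_slopeFn_mul_norm (hne : (subdiff f x).Nonempty) (y : E) :
    f x - f y ≤ slopeFn f x * ‖x - y‖ := by
  have : Nonempty (subdiff f x) := hne.to_subtype
  rw [slopeFn, Metric.infDist_eq_iInf, Real.iInf_mul_of_nonneg (norm_nonneg _)]
  refine le_ciInf fun ⟨v, hv⟩ => ?_
  have hsub := hv y
  have hcs := real_inner_le_norm v (x - y)
  rw [← neg_sub x y, inner_neg_right] at hsub
  simp only [dist_zero_left]
  linarith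

theorem slopeFn_eq_zero_of_mem_argminSet (hx : x ∈ argminSet f) : slopeFn f x = 0 :=
  le_antisymm (by simpa using slopeFn_le_norm (x := x) (v := 0) fun y => by simpa using hx y)
    (slopeFn_nonneg f x)

theorem mem_argminSet_of_slopeFn_eq_zero (hne : (subdiff f x).Nonempty) (h : slopeFn f x = 0) :
    x ∈ argminSet f := by
  have h0 : (0 : E) ∈ subdiff f x := ((isClosed_subdiff f x).mem_iff_infDist_zero hne).2 h
  simpa [argminSet, subdiff] using h0

def IsProxPoint (g : E → ℝ) (lam : ℝ) (q p : E) : Prop :=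
  IsMinOn (fun y => g y + lam⁻¹ / 2 * ‖y - q‖ ^ 2) univ p

namespace IsProxPoint

variable {lam : ℝ} {q p : E}

theorem inv_smul_sub_mem_subdiff (hg : ConvexOn ℝ univ g) (hp : IsProxPoint g lam q p) :
    lam⁻¹ • (q - p) ∈ subdiff g p := by
  intro y
  have hgrowth := (hg.strongConvexOn_add_sq_norm_sub lam⁻¹ q).add_sq_norm_sub_le_of_isMinOn hp
    (mem_univ p) (mem_univ y)
  have hexp : ‖y - q‖ ^ 2 = ‖y - p‖ ^ 2 - 2 * ⟪y - p, q - p⟫ + ‖p - q‖ ^ 2 := by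
    rw [show y - q = (y - p) - (q - p) by abel, norm_sub_sq_real, norm_sub_rev p q]
  rw [hexp] at hgrowth
  rw [real_inner_smul_left, real_inner_comm]
  linarith

theorem mul_slopeFn_le (hg : ConvexOn ℝ univ g) (hp : IsProxPoint g lam q p) (hlam : 0 < lam) :
    lam * slopeFn g p ≤ ‖q - p‖ := by
  have h := slopeFn_le_norm (hp.inv_smul_sub_mem_subdiff hg)
  rw [norm_smul, Real.norm_eq_abs, abs_inv, abs_of_pos hlam] at h
  rwa [← le_inv_mul_iff₀ hlam]

theorem add_inv_mul_sq_norm_le (hg : ConvexOn ℝ univ g) (hp : IsProxPoint g lam q p) :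
    g p + lam⁻¹ * ‖q - p‖ ^ 2 ≤ g q := by
  simpa [real_inner_smul_left, real_inner_self_eq_norm_sq] using hp.inv_smul_sub_mem_subdiff hg q

theorem mul_sq_slopeFn_le_inv_mul_sq (hg : ConvexOn ℝ univ g) (hp : IsProxPoint g lam q p)
    (hlam : 0 < lam) : lam * slopeFn g p ^ 2 ≤ lam⁻¹ * ‖q - p‖ ^ 2 := by
  have hsq : (lam * slopeFn g p) ^ 2 ≤ ‖q - p‖ ^ 2 :=
    pow_le_pow_left₀ (mul_nonneg hlam.le (slopeFn_nonneg g p)) (hp.mul_slopeFn_le hg hlam) 2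
  calc lam * slopeFn g p ^ 2 = lam⁻¹ * (lam * slopeFn g p) ^ 2 := by field_simp
    _ ≤ lam⁻¹ * ‖q - p‖ ^ 2 := by gcongr

theorem mul_sq_slopeFn_le (hg : ConvexOn ℝ univ g) (hp : IsProxPoint g lam q p) (hlam : 0 < lam) :
    lam * slopeFn g p ^ 2 ≤ g q - g p := by
  linarith [hp.mul_sq_slopeFn_le_inv_mul_sq hg hlam, hp.add_inv_mul_sq_norm_le hg]

theorem norm_sub_le_of_mem_argminSet (hg : ConvexOn ℝ univ g) (hp : IsProxPoint g lam q p)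
    (hlam : 0 < lam) {z : E} (hz : z ∈ argminSet g) : ‖p - z‖ ≤ ‖q - z‖ := by
  have hsub := hp.inv_smul_sub_mem_subdiff hg z
  rw [real_inner_smul_left] at hsub
  have hangle : ⟪q - p, z - p⟫ ≤ 0 := by
    by_contra! h
    nlinarith [hz p, inv_pos.2 hlam]
  have hexp : ‖q - z‖ ^ 2 = ‖q - p‖ ^ 2 - 2 * ⟪q - p, z - p⟫ + ‖p - z‖ ^ 2 := by
    rw [show q - z = (q - p) - (z - p) by abel, norm_sub_sq_real, norm_sub_rev z p]
  refine pow_le_pow_iff_left₀ (norm_nonneg _) (norm_nonneg _) two_ne_zero |>.1 ?_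
  nlinarith [sq_nonneg ‖q - p‖]

theorem sub_sub_half_mul_sq_slopeFn_le (hg : ConvexOn ℝ univ g) (hp : IsProxPoint g lam q p)
    (hlam : 0 < lam) (hfq : (subdiff f q).Nonempty) (hs : slopeFn f q = slopeFn g q) :
    f q - g q - lam / 2 * slopeFn g q ^ 2 ≤ f p - g p - lam / 2 * slopeFn g p ^ 2 := by
  set d := ‖q - p‖
  set σ := slopeFn g q
  have hf_drop : f q - f p ≤ σ * d := hs ▸ sub_le_slopeFn_mul_norm hfq p
  have hg_drop := hp.add_inv_mul_sq_norm_le hg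
  have hslope := hp.mul_sq_slopeFn_le_inv_mul_sq hg hlam
  have hamgm : σ * d ≤ lam / 2 * σ ^ 2 + lam⁻¹ / 2 * d ^ 2 := by
    have := sq_nonneg (lam * σ - d)
    field_simp
    nlinarith
  linarith

end IsProxPoint

section ProximalIteration

variable {lam : ℝ} {P : E → E} {z : E}

theorem tendsto_slopeFn_iterate (hg : ConvexOn ℝ univ g) (hP : ∀ q, IsProxPoint g lam q (P q))
    (hlam : 0 < lam) (hz : z ∈ argminSet g) (x : E) :
    Tendsto (fun k => slopeFn g (P^[k] x)) atTop (𝓝 0) := by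
  set S := fun k => P^[k] x
  have hdescent : ∀ k, lam * slopeFn g (S (k + 1)) ^ 2 ≤ g (S k) - g (S (k + 1)) := fun k => by
    simpa only [S, Function.iterate_succ_apply'] using (hP _).mul_sq_slopeFn_le hg hlam
  have hsum : Summable fun k => lam * slopeFn g (S (k + 1)) ^ 2 := by
    refine summable_of_sum_range_le (c := g x - g z) (fun k => by positivity) fun n => ?_
    calc ∑ k ∈ Finset.range n, lam * slopeFn g (S (k + 1)) ^ 2
        ≤ ∑ k ∈ Finset.range n, (g (S k) - g (S (k + 1))) := Finset.sum_le_sum fun k _ => hdescent k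
      _ = g x - g (S n) := Finset.sum_range_sub' _ n
      _ ≤ g x - g z := by linarith [hz (S n)]
  have hsq : Tendsto (fun k => slopeFn g (S (k + 1)) ^ 2) atTop (𝓝 0) := by
    simpa [hlam.ne'] using hsum.tendsto_atTop_zero.const_mul lam⁻¹
  have hslope := hsq.sqrt
  simp only [Real.sqrt_sq (slopeFn_nonneg _ _), Real.sqrt_zero] at hslope
  exact (tendsto_add_atTop_iff_nat 1).1 hslope

theorem norm_iterate_sub_le (hg : ConvexOn ℝ univ g) (hP : ∀ q, IsProxPoint g lam q (P q))
    (hlam : 0 < lam) (hz : z ∈ argminSet g) (x : E) (k : ℕ) : ‖P^[k] x - z‖ ≤ ‖x - z‖ := by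
  induction k with
  | zero => rfl
  | succ k ih =>
    rw [Function.iterate_succ_apply']
    exact ((hP _).norm_sub_le_of_mem_argminSet hg hlam hz).trans ih

end ProximalIteration

end InnerProductSpace

theorem subdiff_nonempty {f : H → ℝ} (hf : ConvexOn ℝ univ f) (hfc : Continuous f) (x : H) :
    (subdiff f x).Nonempty := by
  obtain ⟨φ, hφ⟩ := hf.exists_continuousLinearMap_add_le hfc x
  exact ⟨(InnerProductSpace.toDual ℝ H).symm φ, fun y => by
    simpa [InnerProductSpace.toDual_symm_apply] using hφ y⟩

theorem exists_isProxPoint {g : H → ℝ} (hg : ConvexOn ℝ univ g) (hgc : Continuous g)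
    (hbdd : BddBelow (range g)) {lam : ℝ} (hlam : 0 < lam) (q : H) :
    ∃ p, IsProxPoint g lam q p := by
  have hbdd' : BddBelow (range fun y => g y + lam⁻¹ / 2 * ‖y - q‖ ^ 2) := by
    obtain ⟨c, hc⟩ := hbdd
    refine ⟨c, forall_mem_range.2 fun y => ?_⟩
    have := hc (mem_range_self y)
    have : 0 ≤ lam⁻¹ / 2 * ‖y - q‖ ^ 2 := by positivity
    linarith
  obtain ⟨p, -, hp⟩ := (hg.strongConvexOn_add_sq_norm_sub lam⁻¹ q).exists_isMinOn
    (inv_pos.2 hlam) isClosed_univ univ_nonempty (by fun_prop) (by simpa using hbdd')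
  exact ⟨p, hp⟩

theorem sub_le_half_mul_sq_slopeFn {f g : H → ℝ} (hf : ConvexOn ℝ univ f) (hfc : Continuous f)
    (hg : ConvexOn ℝ univ g) (hgc : Continuous g) {z : H} (hz : z ∈ argminSet g) (hfz : f z ≤ g z)
    (hs : ∀ y, slopeFn f y = slopeFn g y) {lam : ℝ} (hlam : 0 < lam) (x : H) :
    f x - g x ≤ lam / 2 * slopeFn g x ^ 2 := by
  have hbdd : BddBelow (range g) := ⟨g z, forall_mem_range.2 hz⟩
  choose P hP using exists_isProxPoint hg hgc hbdd hlam
  set V := fun k => f (P^[k] x) - g (P^[k] x) - lam / 2 * slopeFn g (P^[k] x) ^ 2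
  have hV : Monotone V := monotone_nat_of_le_succ fun k => by
    simpa only [V, Function.iterate_succ_apply'] using
      (hP _).sub_sub_half_mul_sq_slopeFn_le hg hlam (subdiff_nonempty hf hfc _) (hs _)
  have hbound : ∀ k, V k ≤ slopeFn g (P^[k] x) * ‖x - z‖ := fun k => calc
    V k ≤ f (P^[k] x) - g (P^[k] x) := sub_le_self _ (by positivity)
    _ ≤ f (P^[k] x) - f z := by linarith [hz (P^[k] x)]
    _ ≤ slopeFn f (P^[k] x) * ‖P^[k] x - z‖ := sub_le_slopeFn_mul_norm (subdiff_nonempty hf hfc _) z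
    _ ≤ slopeFn g (P^[k] x) * ‖x - z‖ := by
      rw [hs]
      exact mul_le_mul_of_nonneg_left (norm_iterate_sub_le hg hP hlam hz x k) (slopeFn_nonneg _ _)
  have hlim := (tendsto_slopeFn_iterate hg hP hlam hz x).mul_const ‖x - z‖
  rw [zero_mul] at hlim
  have := ge_of_tendsto' hlim fun k => (hV (Nat.zero_le k)).trans (hbound k)
  simp only [V, Function.iterate_zero_apply] at this
  linarith

theorem le_of_slopeFn_eq {f g : H → ℝ} (hf : ConvexOn ℝ univ f) (hfc : Continuous f)
    (hg : ConvexOn ℝ univ g) (hgc : Continuous g) {z : H} (hz : z ∈ argminSet g) (hfz : f z ≤ g z)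
    (hs : ∀ y, slopeFn f y = slopeFn g y) (x : H) : f x ≤ g x := by
  have hlim : Tendsto (fun n : ℕ => 1 / ((n : ℝ) + 1) / 2 * slopeFn g x ^ 2) atTop (𝓝 0) := by
    simpa using (tendsto_one_div_add_atTop_nhds_zero_nat.div_const 2).mul_const (slopeFn g x ^ 2)
  have := ge_of_tendsto' hlim fun n =>
    sub_le_half_mul_sq_slopeFn hf hfc hg hgc hz hfz hs (by positivity : (0 : ℝ) < 1 / (n + 1)) x
  linarith

theorem slope_determination_general
    (f g : H → ℝ)
    (hf : ConvexOn ℝ univ f) (hfc : Continuous f)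
    (hg : ConvexOn ℝ univ g) (hgc : Continuous g)
    (hCf : (argminSet f).Nonempty)
    (hs : ∀ x, slopeFn f x = slopeFn g x)
    (hmin : ∀ x ∈ argminSet f ∪ argminSet g, f x = g x) :
    f = g := by
  obtain ⟨z, hzf⟩ := hCf
  have hzg : z ∈ argminSet g := mem_argminSet_of_slopeFn_eq_zero (subdiff_nonempty hg hgc z)
    (hs z ▸ slopeFn_eq_zero_of_mem_argminSet hzf)
  have hfz : f z = g z := hmin z (Or.inl hzf)
  funext x
  exact le_antisymm (le_of_slopeFn_eq hf hfc hg hgc hzg hfz.le hs x)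
    (le_of_slopeFn_eq hg hgc hf hfc hzf hfz.ge (fun y => (hs y).symm) x)

theorem slope_determination
    (f g : H → ℝ)
    (hf : ConvexOn ℝ univ f) (hfc : Continuous f)
    (hg : ConvexOn ℝ univ g) (hgc : Continuous g)
    (hCf : (argminSet f).Nonempty) (hCfb : IsBounded (argminSet f))
    (hCg : (argminSet g).Nonempty) (hCgb : IsBounded (argminSet g))
    (hs : ∀ x, slopeFn f x = slopeFn g x)
    (hmin : ∀ x ∈ argminSet f ∪ argminSet g, f x = g x) :
    f = g :=
  slope_determination_general f g hf hfc hg hgc hCf hs hmin
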